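/- arXiv:2605.03386 — 2 statements merged into one kernel-verified Lean document; each statement's English description precedes it below -/
import Mathlib

section
/- Let E be a real Banach space, f : E → E Lipschitz with constant L ≥ 0, and φ : ℝ × E → E a global flow of f. Then for every t ∈ ℝ the time-t flow map φ(t, ·) : E → E is a bijection with inverse φ(−t, ·), and both φ(t, ·) and its inverse are Lipschitz with constant e^{L|t|}; in particular φ(t, ·) is a homeomorphism of E, so a standard Neural ODE preserves the topology of the input space. -/
/-!
Two trajectories of an autonomous ODE with a `K`-Lipschitz vector field drift apart at most
by the factor `exp (K |t|)` (Grönwall, forwards and, after reversing time, backwards). Applied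
to trajectories starting at the same point this gives uniqueness, hence the group law
`φ (s + τ) = φ s ∘ φ τ`, so `φ (-t)` inverts `φ t`; applied to arbitrary starting points it
makes every time-`t` map `exp (K |t|)`-Lipschitz.
-/

open Real

section AutonomousODE

variable {E : Type*} [NormedAddCommGroup E] [NormedSpace ℝ E] {g : E → E} {u v : ℝ → E}

theorem hasDerivAt_comp_neg_of_autonomous (hu : ∀ s, HasDerivAt u (g (u s)) s) (s : ℝ) :
    HasDerivAt (fun r => u (-r)) (-g (u (-s))) s := by
  simpa [Function.comp_def] using (hu (-s)).scomp s (hasDerivAt_neg s)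

theorem dist_le_of_trajectories_autonomous_of_nonneg {K : NNReal} (hg : LipschitzWith K g)
    (hu : ∀ s, HasDerivAt u (g (u s)) s) (hv : ∀ s, HasDerivAt v (g (v s)) s)
    {t : ℝ} (ht : 0 ≤ t) :
    dist (u t) (v t) ≤ dist (u 0) (v 0) * exp (K * t) := by
  simpa using dist_le_of_trajectories_ODE (v := fun _ => g) (fun _ => hg)
    (fun s _ => (hu s).continuousAt.continuousWithinAt) (fun s _ => (hu s).hasDerivWithinAt)
    (fun s _ => (hv s).continuousAt.continuousWithinAt) (fun s _ => (hv s).hasDerivWithinAt)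
    le_rfl t ⟨ht, le_rfl⟩

theorem dist_le_of_trajectories_autonomous {K : NNReal} (hg : LipschitzWith K g)
    (hu : ∀ s, HasDerivAt u (g (u s)) s) (hv : ∀ s, HasDerivAt v (g (v s)) s) (t : ℝ) :
    dist (u t) (v t) ≤ dist (u 0) (v 0) * exp (K * |t|) := by
  rcases le_total 0 t with ht | ht
  · simpa [abs_of_nonneg ht] using dist_le_of_trajectories_autonomous_of_nonneg hg hu hv ht
  · simpa [abs_of_nonpos ht] using dist_le_of_trajectories_autonomous_of_nonneg hg.neg
      (hasDerivAt_comp_neg_of_autonomous hu) (hasDerivAt_comp_neg_of_autonomous hv)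
      (neg_nonneg.2 ht)

theorem eq_of_trajectories_autonomous {K : NNReal} (hg : LipschitzWith K g)
    (hu : ∀ s, HasDerivAt u (g (u s)) s) (hv : ∀ s, HasDerivAt v (g (v s)) s)
    (h0 : u 0 = v 0) (t : ℝ) : u t = v t := by
  simpa [h0] using dist_le_of_trajectories_autonomous hg hu hv t

end AutonomousODE

section Flow

variable {E : Type*} [NormedAddCommGroup E] [NormedSpace ℝ E] {g : E → E} {K : NNReal}
  {φ : ℝ → E → E}

theorem flow_dist_le (hg : LipschitzWith K g) (hφ0 : ∀ x, φ 0 x = x)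
    (hφ' : ∀ x t, HasDerivAt (fun s => φ s x) (g (φ t x)) t) (t : ℝ) (x y : E) :
    dist (φ t x) (φ t y) ≤ dist x y * exp (K * |t|) := by
  simpa [hφ0] using dist_le_of_trajectories_autonomous hg (hφ' x) (hφ' y) t

theorem flow_add (hg : LipschitzWith K g) (hφ0 : ∀ x, φ 0 x = x)
    (hφ' : ∀ x t, HasDerivAt (fun s => φ s x) (g (φ t x)) t) (s τ : ℝ) (x : E) :
    φ (s + τ) x = φ s (φ τ x) := by
  have hshift : ∀ r, HasDerivAt (fun r => φ (r + τ) x) (g (φ (r + τ) x)) r := fun r => by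
    simpa [Function.comp_def] using (hφ' x (r + τ)).scomp r ((hasDerivAt_id r).add_const τ)
  exact eq_of_trajectories_autonomous hg hshift (hφ' (φ τ x)) (by simp [hφ0]) s

theorem flow_neg_apply_flow (hg : LipschitzWith K g) (hφ0 : ∀ x, φ 0 x = x)
    (hφ' : ∀ x t, HasDerivAt (fun s => φ s x) (g (φ t x)) t) (t : ℝ) (x : E) :
    φ (-t) (φ t x) = x := by
  rw [← flow_add hg hφ0 hφ', neg_add_cancel, hφ0]

theorem flow_lipschitzWith (hg : LipschitzWith K g) (hφ0 : ∀ x, φ 0 x = x)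
    (hφ' : ∀ x t, HasDerivAt (fun s => φ s x) (g (φ t x)) t) (t : ℝ) :
    LipschitzWith (exp (K * |t|)).toNNReal (φ t) :=
  LipschitzWith.of_dist_le_mul fun x y => by
    rw [coe_toNNReal _ (exp_pos _).le, mul_comm]
    exact flow_dist_le hg hφ0 hφ' t x y

def flowHomeomorph (hg : LipschitzWith K g) (hφ0 : ∀ x, φ 0 x = x)
    (hφ' : ∀ x t, HasDerivAt (fun s => φ s x) (g (φ t x)) t) (t : ℝ) : E ≃ₜ E where
  toFun := φ t
  invFun := φ (-t)
  left_inv := flow_neg_apply_flow hg hφ0 hφ' t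
  right_inv x := by simpa using flow_neg_apply_flow hg hφ0 hφ' (-t) x
  continuous_toFun := (flow_lipschitzWith hg hφ0 hφ' t).continuous
  continuous_invFun := (flow_lipschitzWith hg hφ0 hφ' (-t)).continuous

end Flow

theorem lipschitz_flow_homeomorph_general
    {E : Type*} [NormedAddCommGroup E] [NormedSpace ℝ E]
    (f : E → E) (L : ℝ) (hL : 0 ≤ L)
    (hf : ∀ x y : E, ‖f x - f y‖ ≤ L * ‖x - y‖)
    (φ : ℝ → E → E)
    (hφ0 : ∀ x : E, φ 0 x = x)
    (hφ' : ∀ (x : E) (t : ℝ), HasDerivAt (fun s => φ s x) (f (φ t x)) t)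
    (t : ℝ) :
    Function.Bijective (φ t) ∧
      (∀ x : E, φ (-t) (φ t x) = x) ∧
      (∀ x : E, φ t (φ (-t) x) = x) ∧
      (∀ x y : E, ‖φ t x - φ t y‖ ≤ Real.exp (L * |t|) * ‖x - y‖) ∧
      (∀ x y : E, ‖φ (-t) x - φ (-t) y‖ ≤ Real.exp (L * |t|) * ‖x - y‖) ∧
      (∃ h : E ≃ₜ E, ∀ x : E, h x = φ t x) := by
  have hfK : LipschitzWith L.toNNReal f :=
    LipschitzWith.of_dist_le_mul fun x y => by
      simpa only [dist_eq_norm, coe_toNNReal _ hL] using hf x y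
  have hdist (s : ℝ) (x y : E) : ‖φ s x - φ s y‖ ≤ exp (L * |s|) * ‖x - y‖ := by
    simpa only [dist_eq_norm, coe_toNNReal _ hL, mul_comm (exp _)] using
      flow_dist_le hfK hφ0 hφ' s x y
  let h := flowHomeomorph hfK hφ0 hφ' t
  refine ⟨h.bijective, h.left_inv, h.right_inv, hdist t, ?_, h, fun _ => rfl⟩
  simpa using hdist (-t)

/-- **The time-`t` flow map of a Lipschitz Neural ODE is a bi-Lipschitz homeomorphism.**
If `φ` is a global flow of a Lipschitz vector field `f` (constant `L ≥ 0`), then for every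
`t ∈ ℝ` the map `φ t : E → E` is a bijection with inverse `φ (-t)`, both `φ t` and `φ (-t)`
are Lipschitz with constant `exp (L |t|)`, and `φ t` is a homeomorphism of `E`: a standard
Neural ODE preserves the topology of the input space. -/
theorem lipschitz_flow_homeomorph
    {E : Type*} [NormedAddCommGroup E] [NormedSpace ℝ E] [CompleteSpace E]
    (f : E → E) (L : ℝ) (hL : 0 ≤ L)
    (hf : ∀ x y : E, ‖f x - f y‖ ≤ L * ‖x - y‖)
    (φ : ℝ → E → E)
    (hφ0 : ∀ x : E, φ 0 x = x)
    (hφ' : ∀ (x : E) (t : ℝ), HasDerivAt (fun s => φ s x) (f (φ t x)) t)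
    (t : ℝ) :
    Function.Bijective (φ t) ∧
      (∀ x : E, φ (-t) (φ t x) = x) ∧
      (∀ x : E, φ t (φ (-t) x) = x) ∧
      (∀ x y : E, ‖φ t x - φ t y‖ ≤ Real.exp (L * |t|) * ‖x - y‖) ∧
      (∀ x y : E, ‖φ (-t) x - φ (-t) y‖ ≤ Real.exp (L * |t|) * ‖x - y‖) ∧
      (∃ h : E ≃ₜ E, ∀ x : E, h x = φ t x) :=
  lipschitz_flow_homeomorph_general f L hL hf φ hφ0 hφ' t
end

section
/- Let E be a real Banach space and f : E → E be twice continuously differentiable with ‖f(x)‖ ≤ M₀, ‖Df(x)‖ ≤ M₁, and ‖D²f(x)‖ ≤ M₂ for all x ∈ E. Then there exists a constant C, depending only on M₀, M₁, M₂, such that for every solution H of H' = f(H) defined on [t₀, t₀ + Δt] with 0 < Δt ≤ 1, the RK2 (midpoint) step satisfies ‖H(t₀ + Δt) − RK2(H(t₀))‖ ≤ C·Δt³, i.e., the second-order RK2 solver has local truncation error of order Δt³. -/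
/-!
Both the exact flow and the midpoint step agree with the second-order Taylor polynomial
`x₀ + Δt f(x₀) + (Δt²/2) Df(x₀) f(x₀)` up to `O(Δt³)`. For the flow, `H'' = Df(H) f(H)` is
Lipschitz along the trajectory, since `x ↦ Df(x) f(x)` is `(M₂M₀ + M₁²)`-Lipschitz and
`‖H(s) − x₀‖ ≤ M₀ (s − t₀)`; integrating this bound twice gives the `Δt³/6` term.
For the midpoint step, `f(x₀ + (Δt/2) f(x₀))` differs from its linearization by at most
`M₂ ‖(Δt/2) f(x₀)‖²`, which after multiplication by `Δt` is again `O(Δt³)`.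
-/

open Set

universe u v

theorem norm_le_of_hasDerivAt_of_norm_le_mul_pow {F : Type v} [NormedAddCommGroup F]
    [NormedSpace ℝ F] {φ φ' : ℝ → F} {a b c : ℝ} (n : ℕ)
    (hφ : ∀ t ∈ Icc a b, HasDerivAt φ (φ' t) t) (ha : φ a = 0)
    (bound : ∀ t ∈ Ico a b, ‖φ' t‖ ≤ c * (t - a) ^ n) {t : ℝ} (ht : t ∈ Icc a b) :
    ‖φ t‖ ≤ c / (n + 1) * (t - a) ^ (n + 1) := by
  have hB : ∀ s, HasDerivAt (fun s => c / (n + 1) * (s - a) ^ (n + 1)) (c * (s - a) ^ n) s := by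
    intro s
    refine ((((hasDerivAt_id s).sub_const a).fun_pow (n + 1)).const_mul (c / (n + 1))).congr_deriv ?_
    push_cast
    field_simp
    simp
  exact image_norm_le_of_norm_deriv_right_le_deriv_boundary
    (fun s hs => (hφ s hs).continuousAt.continuousWithinAt)
    (fun s hs => (hφ s (Ico_subset_Icc_self hs)).hasDerivWithinAt) (by simp [ha]) hB bound ht

section

variable {E : Type u} {F : Type v} [NormedAddCommGroup E] [NormedSpace ℝ E] [NormedAddCommGroup F]
  [NormedSpace ℝ F] {f : E → F}

theorem norm_sub_le_of_forall_norm_fderiv_le {C : ℝ} (hf : Differentiable ℝ f)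
    (bound : ∀ x, ‖fderiv ℝ f x‖ ≤ C) (x y : E) : ‖f y - f x‖ ≤ C * ‖y - x‖ :=
  convex_univ.norm_image_sub_le_of_norm_fderiv_le (fun z _ => hf z) (fun z _ => bound z)
    (mem_univ x) (mem_univ y)

theorem norm_sub_sub_fderiv_le_of_norm_fderiv_fderiv_le {M : ℝ} (hf : Differentiable ℝ f)
    (hf' : Differentiable ℝ (fderiv ℝ f)) (bound : ∀ x, ‖fderiv ℝ (fderiv ℝ f) x‖ ≤ M)
    (x h : E) : ‖f (x + h) - f x - fderiv ℝ f x h‖ ≤ M * ‖h‖ ^ 2 := by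
  have hM : 0 ≤ M := (norm_nonneg (fderiv ℝ (fderiv ℝ f) x)).trans (bound x)
  have hball : ∀ y ∈ Metric.closedBall x ‖h‖, ‖fderiv ℝ f y - fderiv ℝ f x‖ ≤ M * ‖h‖ := by
    intro y hy
    calc ‖fderiv ℝ f y - fderiv ℝ f x‖ ≤ M * ‖y - x‖ :=
          norm_sub_le_of_forall_norm_fderiv_le hf' bound x y
      _ ≤ M * ‖h‖ := by gcongr; rwa [← dist_eq_norm, ← Metric.mem_closedBall]
  have := (convex_closedBall x ‖h‖).norm_image_sub_le_of_norm_fderiv_le'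
    (fun y _ => hf y) hball (Metric.mem_closedBall_self (norm_nonneg h))
    (show x + h ∈ Metric.closedBall x ‖h‖ by simp [dist_eq_norm])
  simpa [sq, mul_assoc] using this

end

section

variable {E : Type u} [NormedAddCommGroup E] [NormedSpace ℝ E] {f : E → E} {M₀ M₁ M₂ : ℝ}

theorem norm_fderiv_apply_self_sub_le (hf : Differentiable ℝ f)
    (hf' : Differentiable ℝ (fderiv ℝ f)) (h₀ : ∀ x, ‖f x‖ ≤ M₀)
    (h₁ : ∀ x, ‖fderiv ℝ f x‖ ≤ M₁) (h₂ : ∀ x, ‖fderiv ℝ (fderiv ℝ f) x‖ ≤ M₂) (x y : E) :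
    ‖fderiv ℝ f y (f y) - fderiv ℝ f x (f x)‖ ≤ (M₂ * M₀ + M₁ ^ 2) * ‖y - x‖ := by
  have hM₁ : 0 ≤ M₁ := (norm_nonneg _).trans (h₁ x)
  have hsplit : fderiv ℝ f y (f y) - fderiv ℝ f x (f x)
      = (fderiv ℝ f y - fderiv ℝ f x) (f y) + fderiv ℝ f x (f y - f x) := by
    simp only [sub_apply, map_sub]
    abel
  rw [hsplit]
  calc _ ≤ ‖fderiv ℝ f y - fderiv ℝ f x‖ * ‖f y‖ + ‖fderiv ℝ f x‖ * ‖f y - f x‖ :=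
        (norm_add_le _ _).trans
          (add_le_add (ContinuousLinearMap.le_opNorm _ _) (ContinuousLinearMap.le_opNorm _ _))
    _ ≤ M₂ * ‖y - x‖ * M₀ + M₁ * (M₁ * ‖y - x‖) :=
        add_le_add
          (mul_le_mul (norm_sub_le_of_forall_norm_fderiv_le hf' h₂ x y) (h₀ y) (norm_nonneg _)
            (mul_nonneg ((norm_nonneg _).trans (h₂ x)) (norm_nonneg _)))
          (mul_le_mul (h₁ x) (norm_sub_le_of_forall_norm_fderiv_le hf h₁ x y) (norm_nonneg _) hM₁)
    _ = (M₂ * M₀ + M₁ ^ 2) * ‖y - x‖ := by ring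

theorem norm_comp_solution_sub_linear_le {H : ℝ → E} {t₀ t₁ : ℝ} (hf : Differentiable ℝ f)
    (hf' : Differentiable ℝ (fderiv ℝ f)) (h₀ : ∀ x, ‖f x‖ ≤ M₀)
    (h₁ : ∀ x, ‖fderiv ℝ f x‖ ≤ M₁) (h₂ : ∀ x, ‖fderiv ℝ (fderiv ℝ f) x‖ ≤ M₂)
    (hH : ∀ s ∈ Icc t₀ t₁, HasDerivAt H (f (H s)) s) {t : ℝ} (ht : t ∈ Icc t₀ t₁) :
    ‖f (H t) - f (H t₀) - (t - t₀) • fderiv ℝ f (H t₀) (f (H t₀))‖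
      ≤ (M₂ * M₀ + M₁ ^ 2) * M₀ / 2 * (t - t₀) ^ 2 := by
  set x₀ := H t₀
  set D₀ := fderiv ℝ f x₀ (f x₀)
  have hL : 0 ≤ M₂ * M₀ + M₁ ^ 2 :=
    add_nonneg (mul_nonneg ((norm_nonneg _).trans (h₂ 0)) ((norm_nonneg _).trans (h₀ 0)))
      (sq_nonneg _)
  have hdisp : ∀ s ∈ Icc t₀ t₁, ‖H s - x₀‖ ≤ M₀ * (s - t₀) :=
    norm_image_sub_le_of_norm_deriv_right_le_segment
      (fun s hs => (hH s hs).continuousAt.continuousWithinAt)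
      (fun s hs => (hH s (Ico_subset_Icc_self hs)).hasDerivWithinAt)
      (fun s _ => h₀ _)
  have hderiv : ∀ s ∈ Icc t₀ t₁,
      HasDerivAt (fun s => f (H s) - f x₀ - (s - t₀) • D₀) (fderiv ℝ f (H s) (f (H s)) - D₀) s := by
    intro s hs
    refine ((((hf (H s)).hasFDerivAt.comp_hasDerivAt s (hH s hs)).sub_const (f x₀)).sub
      (((hasDerivAt_id s).sub_const t₀).smul_const D₀)).congr_deriv ?_
    simp
  have hbound : ∀ s ∈ Ico t₀ t₁,
      ‖fderiv ℝ f (H s) (f (H s)) - D₀‖ ≤ (M₂ * M₀ + M₁ ^ 2) * M₀ * (s - t₀) ^ 1 := by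
    intro s hs
    calc _ ≤ (M₂ * M₀ + M₁ ^ 2) * ‖H s - x₀‖ :=
          norm_fderiv_apply_self_sub_le hf hf' h₀ h₁ h₂ x₀ (H s)
      _ ≤ (M₂ * M₀ + M₁ ^ 2) * (M₀ * (s - t₀)) := by
          gcongr; exact hdisp s (Ico_subset_Icc_self hs)
      _ = (M₂ * M₀ + M₁ ^ 2) * M₀ * (s - t₀) ^ 1 := by ring
  simpa [one_add_one_eq_two] using
    norm_le_of_hasDerivAt_of_norm_le_mul_pow 1 hderiv (by simp [x₀]) hbound ht

theorem norm_solution_sub_taylor_le {H : ℝ → E} {t₀ t₁ : ℝ} (hf : Differentiable ℝ f)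
    (hf' : Differentiable ℝ (fderiv ℝ f)) (h₀ : ∀ x, ‖f x‖ ≤ M₀)
    (h₁ : ∀ x, ‖fderiv ℝ f x‖ ≤ M₁) (h₂ : ∀ x, ‖fderiv ℝ (fderiv ℝ f) x‖ ≤ M₂)
    (hH : ∀ s ∈ Icc t₀ t₁, HasDerivAt H (f (H s)) s) {t : ℝ} (ht : t ∈ Icc t₀ t₁) :
    ‖H t - (H t₀ + (t - t₀) • f (H t₀) + ((t - t₀) ^ 2 / 2) • fderiv ℝ f (H t₀) (f (H t₀)))‖
      ≤ (M₂ * M₀ + M₁ ^ 2) * M₀ / 6 * (t - t₀) ^ 3 := by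
  set x₀ := H t₀
  set D₀ := fderiv ℝ f x₀ (f x₀)
  have hderiv : ∀ s ∈ Icc t₀ t₁,
      HasDerivAt (fun s => H s - (x₀ + (s - t₀) • f x₀ + ((s - t₀) ^ 2 / 2) • D₀))
        (f (H s) - f x₀ - (s - t₀) • D₀) s := by
    intro s hs
    refine ((hH s hs).sub (((((hasDerivAt_id s).sub_const t₀).smul_const (f x₀)).const_add x₀).add
      ((((hasDerivAt_id s).sub_const t₀).fun_pow 2).div_const 2 |>.smul_const D₀))).congr_deriv ?_
    simp only [id_eq, one_smul, Nat.cast_ofNat, mul_one]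
    module
  have := norm_le_of_hasDerivAt_of_norm_le_mul_pow 2 hderiv (by simp [x₀])
    (fun s hs => norm_comp_solution_sub_linear_le hf hf' h₀ h₁ h₂ hH (Ico_subset_Icc_self hs)) ht
  convert this using 2
  ring

noncomputable def rk2Step (f : E → E) (Δt : ℝ) (x : E) : E :=
  x + Δt • f (x + (Δt / 2) • f x)

theorem norm_rk2Step_sub_taylor_le (hf : Differentiable ℝ f)
    (hf' : Differentiable ℝ (fderiv ℝ f)) (h₀ : ∀ x, ‖f x‖ ≤ M₀)
    (h₂ : ∀ x, ‖fderiv ℝ (fderiv ℝ f) x‖ ≤ M₂) (x : E) (Δt : ℝ) :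
    ‖rk2Step f Δt x - (x + Δt • f x + (Δt ^ 2 / 2) • fderiv ℝ f x (f x))‖
      ≤ M₂ * M₀ ^ 2 / 4 * |Δt| ^ 3 := by
  unfold rk2Step
  set h := (Δt / 2) • f x
  have hM₂ : 0 ≤ M₂ := (norm_nonneg (fderiv ℝ (fderiv ℝ f) x)).trans (h₂ x)
  have hh : ‖h‖ ≤ |Δt| / 2 * M₀ := by
    rw [norm_smul, Real.norm_eq_abs, abs_div, abs_two]
    gcongr
    exact h₀ x
  have hsplit : x + Δt • f (x + h) - (x + Δt • f x + (Δt ^ 2 / 2) • fderiv ℝ f x (f x))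
      = Δt • (f (x + h) - f x - fderiv ℝ f x h) := by
    simp only [h, map_smul]
    module
  rw [hsplit, norm_smul, Real.norm_eq_abs]
  calc |Δt| * ‖f (x + h) - f x - fderiv ℝ f x h‖ ≤ |Δt| * (M₂ * ‖h‖ ^ 2) := by
        gcongr
        exact norm_sub_sub_fderiv_le_of_norm_fderiv_fderiv_le hf hf' h₂ x h
    _ ≤ |Δt| * (M₂ * (|Δt| / 2 * M₀) ^ 2) := by gcongr
    _ = M₂ * M₀ ^ 2 / 4 * |Δt| ^ 3 := by ring

end

theorem rk2_local_truncation_error_general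
    {E : Type*} [NormedAddCommGroup E] [NormedSpace ℝ E]
    (M₀ M₁ M₂ : ℝ) :
    ∃ C : ℝ, ∀ f : E → E,
      ContDiff ℝ 2 f →
      (∀ x : E, ‖f x‖ ≤ M₀) →
      (∀ x : E, ‖fderiv ℝ f x‖ ≤ M₁) →
      (∀ x : E, ‖fderiv ℝ (fderiv ℝ f) x‖ ≤ M₂) →
      ∀ (t₀ Δt : ℝ) (H : ℝ → E),
        0 < Δt → Δt ≤ 1 →
        (∀ s ∈ Set.Icc t₀ (t₀ + Δt), HasDerivAt H (f (H s)) s) →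
        ‖H (t₀ + Δt) - (H t₀ + Δt • f (H t₀ + (Δt / 2) • f (H t₀)))‖ ≤ C * Δt ^ 3 := by
  refine ⟨(M₂ * M₀ + M₁ ^ 2) * M₀ / 6 + M₂ * M₀ ^ 2 / 4, ?_⟩
  intro f hf h₀ h₁ h₂ t₀ Δt H hΔt _ hH
  have hf1 : Differentiable ℝ f := hf.differentiable (by norm_num)
  have hf2 : Differentiable ℝ (fderiv ℝ f) :=
    (hf.fderiv_right (m := 1) (by norm_num)).differentiable one_ne_zero
  have hflow := norm_solution_sub_taylor_le hf1 hf2 h₀ h₁ h₂ hH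
    (right_mem_Icc.2 (le_add_of_nonneg_right hΔt.le))
  have hstep := norm_rk2Step_sub_taylor_le hf1 hf2 h₀ h₂ (H t₀) Δt
  rw [add_sub_cancel_left] at hflow
  rw [abs_of_pos hΔt, norm_sub_rev] at hstep
  calc _ ≤ _ := norm_sub_le_norm_sub_add_norm_sub _ _ _
    _ ≤ (M₂ * M₀ + M₁ ^ 2) * M₀ / 6 * Δt ^ 3 + M₂ * M₀ ^ 2 / 4 * Δt ^ 3 := add_le_add hflow hstep
    _ = _ := by ring

/-- **The second-order RK2 solver has local truncation error of order `Δt³`.**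
For every `M₀, M₁, M₂` there exists a constant `C`, depending only on `M₀, M₁, M₂`, such
that for every twice continuously differentiable vector field `f : E → E` with
`‖f‖ ≤ M₀`, `‖Df‖ ≤ M₁`, `‖D²f‖ ≤ M₂` everywhere, and every solution `H` of `H' = f(H)`
on `[t₀, t₀ + Δt]` with `0 < Δt ≤ 1`, the RK2 (midpoint) step satisfies
`‖H(t₀ + Δt) − RK2(H t₀)‖ ≤ C Δt³`. -/
theorem rk2_local_truncation_error
    {E : Type*} [NormedAddCommGroup E] [NormedSpace ℝ E] [CompleteSpace E]
    (M₀ M₁ M₂ : ℝ) :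
    ∃ C : ℝ, ∀ f : E → E,
      ContDiff ℝ 2 f →
      (∀ x : E, ‖f x‖ ≤ M₀) →
      (∀ x : E, ‖fderiv ℝ f x‖ ≤ M₁) →
      (∀ x : E, ‖fderiv ℝ (fderiv ℝ f) x‖ ≤ M₂) →
      ∀ (t₀ Δt : ℝ) (H : ℝ → E),
        0 < Δt → Δt ≤ 1 →
        (∀ s ∈ Set.Icc t₀ (t₀ + Δt), HasDerivAt H (f (H s)) s) →
        ‖H (t₀ + Δt) - (H t₀ + Δt • f (H t₀ + (Δt / 2) • f (H t₀)))‖ ≤ C * Δt ^ 3 :=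
  rk2_local_truncation_error_general M₀ M₁ M₂
end
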